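/- arXiv:1007.2833 — 2 statements merged into one kernel-verified Lean document; each statement's English description precedes it below -/
import Mathlib

section
/- There exists a constant c > 0, depending only on L and h, such that for every u of class C² on M̄ vanishing on Γ_l ∪ Γ_b with ∫_{−h}^0 u(x,z) dz = 0 for all x, the L² norm of the nonlinear term satisfies | u ∂_x u + w(u) ∂_z u |² ≤ c ‖u‖_{H¹}³ |u|_{H²}. -/
open MeasureTheory Set intervalIntegral

/-- Partial derivative in the first (horizontal, `x`) variable. -/
noncomputable def pdx (f : ℝ × ℝ → ℝ) (p : ℝ × ℝ) : ℝ := fderiv ℝ f p (1, 0)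

/-- Partial derivative in the second (vertical, `z`) variable. -/
noncomputable def pdz (f : ℝ × ℝ → ℝ) (p : ℝ × ℝ) : ℝ := fderiv ℝ f p (0, 1)

/-- The diagnostic vertical velocity `w(u)(x,z) = ∫_z^0 ∂ₓ u(x,s) ds`. -/
noncomputable def wOp (u : ℝ × ℝ → ℝ) (p : ℝ × ℝ) : ℝ := ∫ s in p.2..0, pdx u (p.1, s)

/-- The open domain `M = (0,L) × (-h,0)`. -/
def dom (L h : ℝ) : Set (ℝ × ℝ) := Ioo 0 L ×ˢ Ioo (-h) 0

/-- The closed domain `M̄ = [0,L] × [-h,0]`. -/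
def cdom (L h : ℝ) : Set (ℝ × ℝ) := Icc 0 L ×ˢ Icc (-h) 0

/-- The `L²(M)` norm. -/
noncomputable def l2 (L h : ℝ) (f : ℝ × ℝ → ℝ) : ℝ :=
  Real.sqrt (∫ p in dom L h, f p ^ 2)

/-- The `H¹(M)` norm. -/
noncomputable def h1n (L h : ℝ) (f : ℝ × ℝ → ℝ) : ℝ :=
  Real.sqrt (l2 L h f ^ 2 + l2 L h (pdx f) ^ 2 + l2 L h (pdz f) ^ 2)

/-- The `H²(M)` norm. -/
noncomputable def h2n (L h : ℝ) (f : ℝ × ℝ → ℝ) : ℝ :=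
  Real.sqrt (h1n L h f ^ 2 + l2 L h (pdx (pdx f)) ^ 2 + l2 L h (pdx (pdz f)) ^ 2
    + l2 L h (pdz (pdz f)) ^ 2)

/-!
Along a vertical line, `u` (which vanishes at the bottom) and `w(u)` are integrals of `∂_z u`
and `∂_x u`, so by Cauchy–Schwarz `u(x,z)²` and `w(u)(x,z)²` are at most `h ∫ v(x,s)² ds` with
`v = ∂_z u`, resp. `v = ∂_x u`. A one-dimensional Agmon-type inequality in the horizontal
variable, `g(x)² ≤ (1/L) ∫ g² + 2 ∫ |g g'|`, integrated in `s`, bounds this slice integral by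
`|v|²/L + 2 |v| |∂_x v|`. Hence `u²` and `w(u)²` are bounded pointwise by
`A = h (‖u‖²_{H¹}/L + 2 ‖u‖_{H¹} |u|_{H²})`, and
`|u ∂_x u + w(u) ∂_z u|² ≤ 2A (|∂_x u|² + |∂_z u|²) ≤ 2h (1/L + 2) ‖u‖³_{H¹} |u|_{H²}`.
-/

theorem integral_abs_mul_le_sqrt_mul_sqrt {α : Type*} [MeasurableSpace α] {μ : Measure α}
    {f g : α → ℝ} (hf : MemLp f 2 μ) (hg : MemLp g 2 μ) :
    ∫ a, |f a * g a| ∂μ ≤ √(∫ a, f a ^ 2 ∂μ) * √(∫ a, g a ^ 2 ∂μ) := by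
  have key := integral_mul_norm_le_Lp_mul_Lq (μ := μ) (f := f) (g := g)
    (Real.holderConjugate_iff.mpr ⟨by norm_num, by norm_num⟩ : (2 : ℝ).HolderConjugate 2)
    (by simpa using hf) (by simpa using hg)
  have abs_rpow_two : ∀ x : ℝ, |x| ^ (2 : ℝ) = x ^ 2 := fun x => by
    rw [Real.rpow_two, sq_abs]
  simp only [Real.norm_eq_abs, abs_rpow_two, ← abs_mul] at key
  rwa [← Real.sqrt_eq_rpow, ← Real.sqrt_eq_rpow] at key

theorem sq_intervalIntegral_le {f : ℝ → ℝ} (hf : Continuous f) {a b : ℝ} (hab : a ≤ b) :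
    (∫ t in a..b, f t) ^ 2 ≤ (b - a) * ∫ t in a..b, f t ^ 2 := by
  have memLp : ∀ g : ℝ → ℝ, Continuous g → MemLp g 2 (volume.restrict (Ioc a b)) := fun g hg =>
    (memLp_two_iff_integrable_sq hg.aestronglyMeasurable).mpr (hg.pow 2).integrableOn_Ioc
  have cs := integral_abs_mul_le_sqrt_mul_sqrt (memLp f hf) (memLp 1 continuous_const)
  simp only [Pi.one_apply, mul_one, one_pow, setIntegral_const, Real.volume_real_Ioc_of_le hab,
    smul_eq_mul] at cs
  rw [integral_of_le hab, integral_of_le hab]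
  calc (∫ t in Ioc a b, f t) ^ 2 = |∫ t in Ioc a b, f t| ^ 2 := (sq_abs _).symm
    _ ≤ (√(∫ t in Ioc a b, f t ^ 2) * √(b - a)) ^ 2 :=
        pow_le_pow_left₀ (abs_nonneg _) (MeasureTheory.abs_integral_le_integral_abs.trans cs) 2
    _ = (b - a) * ∫ t in Ioc a b, f t ^ 2 := by
        rw [mul_pow, Real.sq_sqrt (setIntegral_nonneg measurableSet_Ioc fun _ _ => sq_nonneg _),
          Real.sq_sqrt (sub_nonneg.2 hab), mul_comm]

theorem sq_intervalIntegral_le_of_subinterval {f : ℝ → ℝ} (hf : Continuous f) {a b c d : ℝ}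
    (hac : a ≤ c) (hcd : c ≤ d) (hdb : d ≤ b) :
    (∫ t in c..d, f t) ^ 2 ≤ (b - a) * ∫ t in a..b, f t ^ 2 := by
  have mono : ∫ t in c..d, f t ^ 2 ≤ ∫ t in a..b, f t ^ 2 :=
    integral_mono_interval hac hcd hdb (Filter.Eventually.of_forall fun t => sq_nonneg _)
      ((hf.pow 2).intervalIntegrable _ _)
  have nonneg : 0 ≤ ∫ t in c..d, f t ^ 2 := integral_nonneg hcd fun t _ => sq_nonneg _
  calc _ ≤ (d - c) * ∫ t in c..d, f t ^ 2 := sq_intervalIntegral_le hf hcd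
    _ ≤ (b - a) * ∫ t in a..b, f t ^ 2 := mul_le_mul (by linarith) mono nonneg (by linarith)

theorem sq_le_integral_sq_div_add_two_mul_integral_abs_mul_deriv {g g' : ℝ → ℝ}
    (hg : ∀ t, HasDerivAt g (g' t) t) (hg' : Continuous g') {a b x : ℝ} (hab : a < b)
    (hx : x ∈ Icc a b) :
    g x ^ 2 ≤ (∫ t in a..b, g t ^ 2) / (b - a) + 2 * ∫ t in a..b, |g t * g' t| := by
  have hgc : Continuous g := continuous_iff_continuousAt.mpr fun t => (hg t).continuousAt
  have hg2 : Continuous fun t => g t ^ 2 := hgc.pow 2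
  have hF : Continuous fun t => 2 * g t * g' t := (continuous_const.mul hgc).mul hg'
  set B := ∫ t in a..b, |g t * g' t|
  have le_sq_add : ∀ y ∈ Icc a b, g x ^ 2 ≤ g y ^ 2 + 2 * B := by
    intro y hy
    have ftc : ∫ t in y..x, 2 * g t * g' t = g x ^ 2 - g y ^ 2 :=
      integral_eq_sub_of_hasDerivAt
        (fun t _ => by simpa [mul_comm, mul_assoc, mul_left_comm] using (hg t).pow 2)
        (hF.intervalIntegrable _ _)
    have ftc_le : ∫ t in y..x, 2 * g t * g' t ≤ 2 * B := calc
      _ ≤ ∫ t in uIoc y x, ‖2 * g t * g' t‖ :=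
          (Real.le_norm_self _).trans norm_integral_le_integral_norm_uIoc
      _ ≤ ∫ t in Ioc a b, ‖2 * g t * g' t‖ :=
          setIntegral_mono_set hF.norm.integrableOn_Ioc
            (Filter.Eventually.of_forall fun _ => norm_nonneg _)
            (Ioc_subset_Ioc (le_min hy.1 hx.1) (max_le hy.2 hx.2)).eventuallyLE
      _ = 2 * B := by
          rw [← integral_of_le hab.le, ← intervalIntegral.integral_const_mul]
          simp only [Real.norm_eq_abs, abs_mul, abs_two, mul_assoc]
    linarith
  have averaged : (b - a) * g x ^ 2 ≤ (∫ t in a..b, g t ^ 2) + (b - a) * (2 * B) := by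
    have := integral_mono_on (μ := volume) (g := fun y => g y ^ 2 + 2 * B) hab.le
      intervalIntegrable_const
      ((hg2.add continuous_const).intervalIntegrable _ _) le_sq_add
    rwa [integral_add (hg2.intervalIntegrable _ _) intervalIntegrable_const,
      intervalIntegral.integral_const, intervalIntegral.integral_const, smul_eq_mul,
      smul_eq_mul] at this
  rw [div_add' _ _ _ (sub_ne_zero.2 hab.ne'), le_div_iff₀ (sub_pos.2 hab)]
  linarith

section Rectangle

variable {L h : ℝ}

theorem dom_subset_cdom : dom L h ⊆ cdom L h := prod_mono Ioo_subset_Icc_self Ioo_subset_Icc_self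

theorem integrableOn_dom {f : ℝ × ℝ → ℝ} (hf : Continuous f) : IntegrableOn f (dom L h) :=
  (hf.continuousOn.integrableOn_compact (isCompact_Icc.prod isCompact_Icc)).mono_set
    dom_subset_cdom

theorem integral_dom_eq_intervalIntegral (hL : 0 ≤ L) (hh : 0 ≤ h) {F : ℝ × ℝ → ℝ}
    (hF : Continuous F) :
    ∫ p in dom L h, F p = ∫ s in (-h)..0, ∫ ξ in 0..L, F (ξ, s) := by
  have hint := integrableOn_dom (L := L) (h := h) hF
  rw [dom, Measure.volume_eq_prod] at hint ⊢
  rw [setIntegral_prod F hint, integral_integral_swap (by rw [Measure.prod_restrict]; exact hint),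
    integral_of_le (by linarith), integral_Ioc_eq_integral_Ioo]
  simp_rw [integral_of_le hL, integral_Ioc_eq_integral_Ioo]

theorem l2_nonneg (f : ℝ × ℝ → ℝ) : 0 ≤ l2 L h f := Real.sqrt_nonneg _

theorem l2_sq (f : ℝ × ℝ → ℝ) : l2 L h f ^ 2 = ∫ p in dom L h, f p ^ 2 :=
  Real.sq_sqrt (setIntegral_nonneg (measurableSet_Ioo.prod measurableSet_Ioo)
    fun _ _ => sq_nonneg _)

theorem integral_abs_mul_le_l2_mul_l2 {f g : ℝ × ℝ → ℝ} (hf : Continuous f) (hg : Continuous g) :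
    ∫ p in dom L h, |f p * g p| ≤ l2 L h f * l2 L h g := by
  have memLp : ∀ φ : ℝ × ℝ → ℝ, Continuous φ → MemLp φ 2 (volume.restrict (dom L h)) :=
    fun φ hφ => (memLp_two_iff_integrable_sq hφ.aestronglyMeasurable).mpr
      (integrableOn_dom (hφ.pow 2))
  exact integral_abs_mul_le_sqrt_mul_sqrt (memLp f hf) (memLp g hg)

theorem l2_sq_mul_add_mul_le {A : ℝ} {a f b g : ℝ × ℝ → ℝ} (ha : Continuous a)
    (hf : Continuous f) (hb : Continuous b) (hg : Continuous g)
    (haA : ∀ p ∈ dom L h, a p ^ 2 ≤ A) (hbA : ∀ p ∈ dom L h, b p ^ 2 ≤ A) :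
    l2 L h (fun p => a p * f p + b p * g p) ^ 2 ≤ 2 * A * (l2 L h f ^ 2 + l2 L h g ^ 2) := by
  rw [l2_sq, l2_sq, l2_sq, mul_add, ← MeasureTheory.integral_const_mul,
    ← MeasureTheory.integral_const_mul, ← integral_add (integrableOn_dom (by fun_prop))
      (integrableOn_dom (by fun_prop))]
  refine setIntegral_mono_on (integrableOn_dom (by fun_prop)) (integrableOn_dom (by fun_prop))
    (measurableSet_Ioo.prod measurableSet_Ioo) fun p hp => ?_
  nlinarith [sq_nonneg (a p * f p - b p * g p),
    mul_le_mul_of_nonneg_right (haA p hp) (sq_nonneg (f p)),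
    mul_le_mul_of_nonneg_right (hbA p hp) (sq_nonneg (g p))]

end Rectangle

section Norms

variable {L h : ℝ} (f : ℝ × ℝ → ℝ)

theorem h1n_sq : h1n L h f ^ 2 = l2 L h f ^ 2 + l2 L h (pdx f) ^ 2 + l2 L h (pdz f) ^ 2 :=
  Real.sq_sqrt (by positivity)

theorem h1n_nonneg : 0 ≤ h1n L h f := Real.sqrt_nonneg _

theorem l2_pdx_sq_add_l2_pdz_sq_le : l2 L h (pdx f) ^ 2 + l2 L h (pdz f) ^ 2 ≤ h1n L h f ^ 2 := by
  rw [h1n_sq]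
  linarith [sq_nonneg (l2 L h f)]

theorem l2_pdx_le_h1n : l2 L h (pdx f) ≤ h1n L h f :=
  (Real.le_sqrt (l2_nonneg _) (by positivity)).2 <| by
    linarith [sq_nonneg (l2 L h f), sq_nonneg (l2 L h (pdz f))]

theorem l2_pdz_le_h1n : l2 L h (pdz f) ≤ h1n L h f :=
  (Real.le_sqrt (l2_nonneg _) (by positivity)).2 <| by
    linarith [sq_nonneg (l2 L h f), sq_nonneg (l2 L h (pdx f))]

theorem h1n_le_h2n : h1n L h f ≤ h2n L h f :=
  (Real.le_sqrt (h1n_nonneg _) (by positivity)).2 <| by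
    linarith [sq_nonneg (l2 L h (pdx (pdx f))), sq_nonneg (l2 L h (pdx (pdz f))),
      sq_nonneg (l2 L h (pdz (pdz f)))]

theorem l2_pdx_pdx_le_h2n : l2 L h (pdx (pdx f)) ≤ h2n L h f :=
  (Real.le_sqrt (l2_nonneg _) (by positivity)).2 <| by
    linarith [sq_nonneg (h1n L h f), sq_nonneg (l2 L h (pdx (pdz f))),
      sq_nonneg (l2 L h (pdz (pdz f)))]

theorem l2_pdx_pdz_le_h2n : l2 L h (pdx (pdz f)) ≤ h2n L h f :=
  (Real.le_sqrt (l2_nonneg _) (by positivity)).2 <| by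
    linarith [sq_nonneg (h1n L h f), sq_nonneg (l2 L h (pdx (pdx f))),
      sq_nonneg (l2 L h (pdz (pdz f)))]

end Norms

section PartialDerivatives

variable {u : ℝ × ℝ → ℝ}

theorem continuous_pdx (hu : ContDiff ℝ 1 u) : Continuous (pdx u) :=
  (hu.continuous_fderiv one_ne_zero).clm_apply continuous_const

theorem continuous_pdz (hu : ContDiff ℝ 1 u) : Continuous (pdz u) :=
  (hu.continuous_fderiv one_ne_zero).clm_apply continuous_const

theorem contDiff_pdx (hu : ContDiff ℝ 2 u) : ContDiff ℝ 1 (pdx u) :=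
  (hu.fderiv_right (by norm_num)).clm_apply contDiff_const

theorem contDiff_pdz (hu : ContDiff ℝ 2 u) : ContDiff ℝ 1 (pdz u) :=
  (hu.fderiv_right (by norm_num)).clm_apply contDiff_const

theorem hasDerivAt_pdx (hu : ContDiff ℝ 1 u) (x s : ℝ) :
    HasDerivAt (fun ξ => u (ξ, s)) (pdx u (x, s)) x :=
  ((hu.differentiable one_ne_zero (x, s)).hasFDerivAt).comp_hasDerivAt x
    ((hasDerivAt_id x).prodMk (hasDerivAt_const x s))

theorem hasDerivAt_pdz (hu : ContDiff ℝ 1 u) (x s : ℝ) :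
    HasDerivAt (fun ζ => u (x, ζ)) (pdz u (x, s)) s :=
  ((hu.differentiable one_ne_zero (x, s)).hasFDerivAt).comp_hasDerivAt s
    ((hasDerivAt_const s x).prodMk (hasDerivAt_id s))

theorem continuous_wOp (hu : ContDiff ℝ 1 u) : Continuous (wOp u) := by
  have hux := continuous_pdx hu
  have : Continuous fun p : ℝ × ℝ => -∫ s in (0 : ℝ)..p.2, pdx u (p.1, s) :=
    (continuous_parametric_intervalIntegral_of_continuous
      (f := fun p t => pdx u (p.1, t)) (by fun_prop) continuous_snd).neg
  simp only [← integral_symm] at this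
  exact this

end PartialDerivatives

section Bounds

variable {L h : ℝ} {u : ℝ × ℝ → ℝ}

theorem sq_le_mul_integral_sq_pdz (hu : ContDiff ℝ 1 u) {x z : ℝ} (hbot : u (x, -h) = 0)
    (hz : z ∈ Icc (-h) 0) :
    u (x, z) ^ 2 ≤ h * ∫ s in (-h)..0, pdz u (x, s) ^ 2 := by
  have hcont : Continuous fun s => pdz u (x, s) := (continuous_pdz hu).comp (by fun_prop)
  have ftc : ∫ s in (-h)..z, pdz u (x, s) = u (x, z) := by
    rw [integral_eq_sub_of_hasDerivAt (fun s _ => hasDerivAt_pdz hu x s)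
      (hcont.intervalIntegrable _ _), hbot, sub_zero]
  simpa [← ftc] using sq_intervalIntegral_le_of_subinterval hcont le_rfl hz.1 hz.2

theorem wOp_sq_le_mul_integral_sq_pdx (hu : ContDiff ℝ 1 u) {x z : ℝ} (hz : z ∈ Icc (-h) 0) :
    wOp u (x, z) ^ 2 ≤ h * ∫ s in (-h)..0, pdx u (x, s) ^ 2 := by
  have hcont : Continuous fun s => pdx u (x, s) := (continuous_pdx hu).comp (by fun_prop)
  have := sq_intervalIntegral_le_of_subinterval hcont hz.1 hz.2 le_rfl
  rwa [zero_sub, neg_neg] at this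

theorem integral_slice_sq_le (hL : 0 < L) (hh : 0 ≤ h) {v : ℝ × ℝ → ℝ} (hv : ContDiff ℝ 1 v)
    {x : ℝ} (hx : x ∈ Icc 0 L) :
    ∫ s in (-h)..0, v (x, s) ^ 2 ≤ l2 L h v ^ 2 / L + 2 * (l2 L h v * l2 L h (pdx v)) := by
  have hvc := hv.continuous
  have hvx := continuous_pdx hv
  have slice_continuous : ∀ F : ℝ × ℝ → ℝ, Continuous F →
      Continuous fun s => ∫ ξ in (0 : ℝ)..L, F (ξ, s) := fun F hF =>
    continuous_parametric_intervalIntegral_of_continuous' (f := fun s ξ => F (ξ, s))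
      (hF.comp continuous_swap) 0 L
  have hsq : Continuous fun p => v p ^ 2 := hvc.pow 2
  have habs : Continuous fun p => |v p * pdx v p| := (hvc.mul hvx).abs
  have hsq_avg : Continuous fun s => (∫ ξ in (0 : ℝ)..L, v (ξ, s) ^ 2) / L :=
    (slice_continuous _ hsq).div_const L
  have habs_int : Continuous fun s => 2 * ∫ ξ in (0 : ℝ)..L, |v (ξ, s) * pdx v (ξ, s)| :=
    continuous_const.mul (slice_continuous _ habs)
  calc ∫ s in (-h)..0, v (x, s) ^ 2
      ≤ ∫ s in (-h)..0, ((∫ ξ in (0 : ℝ)..L, v (ξ, s) ^ 2) / L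
          + 2 * ∫ ξ in (0 : ℝ)..L, |v (ξ, s) * pdx v (ξ, s)|) := by
        refine integral_mono_on (by linarith) ((hsq.comp (by fun_prop)).intervalIntegrable _ _)
          ((hsq_avg.add habs_int).intervalIntegrable _ _)
          fun s _ => ?_
        simpa using sq_le_integral_sq_div_add_two_mul_integral_abs_mul_deriv
          (fun ξ => hasDerivAt_pdx hv ξ s) (hvx.comp (by fun_prop)) hL hx
    _ = (∫ p in dom L h, v p ^ 2) / L + 2 * ∫ p in dom L h, |v p * pdx v p| := by
        rw [integral_add (hsq_avg.intervalIntegrable _ _) (habs_int.intervalIntegrable _ _),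
          intervalIntegral.integral_div, intervalIntegral.integral_const_mul,
          integral_dom_eq_intervalIntegral hL.le hh hsq,
          integral_dom_eq_intervalIntegral hL.le hh habs]
    _ ≤ l2 L h v ^ 2 / L + 2 * (l2 L h v * l2 L h (pdx v)) := by
        rw [l2_sq]
        gcongr
        exact integral_abs_mul_le_l2_mul_l2 hvc hvx

theorem sq_le_of_bottom_eq_zero (hL : 0 < L) (hh : 0 ≤ h) (hu : ContDiff ℝ 2 u)
    (hbot : ∀ x ∈ Icc 0 L, u (x, -h) = 0) {p : ℝ × ℝ} (hp : p ∈ cdom L h) :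
    u p ^ 2 ≤ h * (h1n L h u ^ 2 / L + 2 * (h1n L h u * h2n L h u)) := by
  have := h1n_nonneg (L := L) (h := h) u
  have := l2_nonneg (L := L) (h := h) (pdz u)
  have := l2_nonneg (L := L) (h := h) (pdx (pdz u))
  have := l2_pdz_le_h1n (L := L) (h := h) u
  have := l2_pdx_pdz_le_h2n (L := L) (h := h) u
  calc u p ^ 2
      ≤ h * (l2 L h (pdz u) ^ 2 / L + 2 * (l2 L h (pdz u) * l2 L h (pdx (pdz u)))) :=
        (sq_le_mul_integral_sq_pdz (hu.of_le (by norm_num)) (hbot p.1 hp.1) hp.2).trans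
          (mul_le_mul_of_nonneg_left (integral_slice_sq_le hL hh (contDiff_pdz hu) hp.1) hh)
    _ ≤ h * (h1n L h u ^ 2 / L + 2 * (h1n L h u * h2n L h u)) := by gcongr

theorem wOp_sq_le (hL : 0 < L) (hh : 0 ≤ h) (hu : ContDiff ℝ 2 u) {p : ℝ × ℝ}
    (hp : p ∈ cdom L h) :
    wOp u p ^ 2 ≤ h * (h1n L h u ^ 2 / L + 2 * (h1n L h u * h2n L h u)) := by
  have := h1n_nonneg (L := L) (h := h) u
  have := l2_nonneg (L := L) (h := h) (pdx u)
  have := l2_nonneg (L := L) (h := h) (pdx (pdx u))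
  have := l2_pdx_le_h1n (L := L) (h := h) u
  have := l2_pdx_pdx_le_h2n (L := L) (h := h) u
  calc wOp u p ^ 2
      ≤ h * (l2 L h (pdx u) ^ 2 / L + 2 * (l2 L h (pdx u) * l2 L h (pdx (pdx u)))) :=
        (wOp_sq_le_mul_integral_sq_pdx (hu.of_le (by norm_num)) hp.2).trans
          (mul_le_mul_of_nonneg_left (integral_slice_sq_le hL hh (contDiff_pdx hu) hp.1) hh)
    _ ≤ h * (h1n L h u ^ 2 / L + 2 * (h1n L h u * h2n L h u)) := by gcongr

end Bounds

theorem stmt11 (L h : ℝ) (hL : 0 < L) (hh : 0 < h) :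
    ∃ c > 0, ∀ u : ℝ × ℝ → ℝ,
      ContDiff ℝ 2 u →
      (∀ z ∈ Icc (-h) (0:ℝ), u (0, z) = 0 ∧ u (L, z) = 0) →
      (∀ x ∈ Icc (0:ℝ) L, u (x, -h) = 0) →
      (∀ x ∈ Icc (0:ℝ) L, (∫ z in (-h)..(0:ℝ), u (x, z)) = 0) →
      l2 L h (fun p => u p * pdx u p + wOp u p * pdz u p) ^ 2 ≤
        c * h1n L h u ^ 3 * h2n L h u := by
  refine ⟨2 * h * (1 / L + 2), by positivity, fun u hu _ hbot _ => ?_⟩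
  have hu1 : ContDiff ℝ 1 u := hu.of_le (by norm_num)
  set N₁ := h1n L h u
  set N₂ := h2n L h u
  have hN₁ : 0 ≤ N₁ := h1n_nonneg u
  have hN₁₂ : N₁ ≤ N₂ := h1n_le_h2n u
  have hN₂ : 0 ≤ N₂ := hN₁.trans hN₁₂
  calc _ ≤ 2 * (h * (N₁ ^ 2 / L + 2 * (N₁ * N₂))) * (l2 L h (pdx u) ^ 2 + l2 L h (pdz u) ^ 2) :=
        l2_sq_mul_add_mul_le hu.continuous (continuous_pdx hu1) (continuous_wOp hu1)
          (continuous_pdz hu1)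
          (fun p hp => sq_le_of_bottom_eq_zero hL hh.le hu hbot (dom_subset_cdom hp))
          (fun p hp => wOp_sq_le hL hh.le hu (dom_subset_cdom hp))
    _ ≤ 2 * (h * (N₁ ^ 2 / L + 2 * (N₁ * N₂))) * N₁ ^ 2 := by
        gcongr
        exact l2_pdx_sq_add_l2_pdz_sq_le u
    _ ≤ 2 * h * (1 / L + 2) * N₁ ^ 3 * N₂ := by
        have : N₁ ^ 4 / L ≤ N₁ ^ 3 * N₂ / L := by
          gcongr
          calc N₁ ^ 4 = N₁ ^ 3 * N₁ := by ring
            _ ≤ N₁ ^ 3 * N₂ := by gcongr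
        linear_combination (2 * h) * this
end

section
/- There exists a constant c > 0, depending only on L and h, such that for all u of class C² on M̄, all φ of class C¹ on M̄, and all continuous ψ on M̄, one has | ∫_M u (∂_x φ) ψ dM | ≤ c |u|^{1/2} |u|_{H²}^{1/2} |∂_x φ| |ψ|. -/
open MeasureTheory Set intervalIntegral

/-! Agmon's inequality `sup |u|² ≤ C |u| |u|_{H²}` reduces the claim to Cauchy–Schwarz:
`|∫ u ∂ₓφ ψ| ≤ sup |u| · |∂ₓφ| |ψ|`.

Agmon's inequality comes from the one-dimensional bound `g(x)² ≤ ℓ⁻¹ ∫ g² + 2 ∫ |g| |g'|` on an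
interval of length `ℓ`. Applied along a vertical line through the point it bounds `u²` by
integrals of `u²` and `(∂_z u)²` over that line; applied once more horizontally and integrated,
these line integrals are controlled by `|u|`, `|∂ₓu|`, `|∂_z u|` and `|∂ₓ∂_z u|`. To reach the
exponent `1/2` one needs the interpolation `|∂u|² ≲ |u| |u|_{H²}` for both first derivatives,
which follows by integrating `(∂u)²` by parts once and bounding the boundary terms with the same
one-dimensional estimate. Horizontal estimates are the vertical ones applied to `u ∘ Prod.swap`. -/

theorem integral_abs_mul_abs_le_sqrt_mul_sqrt {α : Type*} [MeasurableSpace α] {μ : Measure α}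
    {f g : α → ℝ} (hf : MemLp f 2 μ) (hg : MemLp g 2 μ) :
    ∫ x, |f x| * |g x| ∂μ ≤ √(∫ x, f x ^ 2 ∂μ) * √(∫ x, g x ^ 2 ∂μ) := by
  have := integral_mul_le_Lp_mul_Lq_of_nonneg Real.HolderConjugate.two_two
    (Filter.Eventually.of_forall fun x => abs_nonneg (f x))
    (Filter.Eventually.of_forall fun x => abs_nonneg (g x))
    (by rw [ENNReal.ofReal_ofNat]; exact hf.abs) (by rw [ENNReal.ofReal_ofNat]; exact hg.abs)
  simpa only [Real.rpow_two, sq_abs, ← Real.sqrt_eq_rpow] using this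

theorem Continuous.memLp_two_restrict {X : Type*} [TopologicalSpace X] [T2Space X]
    [MeasurableSpace X] [OpensMeasurableSpace X] [SecondCountableTopology X] {μ : Measure X}
    [IsFiniteMeasureOnCompacts μ] {f : X → ℝ} (hf : Continuous f) {K s : Set X}
    (hK : IsCompact K) (hsK : s ⊆ K) :
    MemLp f 2 (μ.restrict s) :=
  (memLp_two_iff_integrable_sq hf.aestronglyMeasurable).2
    (((hf.pow 2).continuousOn.integrableOn_compact hK).mono_set hsK)

theorem abs_integral_mul_mul_le {α : Type*} [MeasurableSpace α] {μ : Measure α}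
    {u f g : α → ℝ} {M : ℝ} (hM : 0 ≤ M) (hu : ∀ᵐ x ∂μ, |u x| ≤ M)
    (hf : MemLp f 2 μ) (hg : MemLp g 2 μ) :
    |∫ x, u x * f x * g x ∂μ| ≤ M * (√(∫ x, f x ^ 2 ∂μ) * √(∫ x, g x ^ 2 ∂μ)) := by
  have hfg : Integrable (fun x => |f x| * |g x|) μ := hf.abs.integrable_mul hg.abs
  calc |∫ x, u x * f x * g x ∂μ| ≤ ∫ x, M * (|f x| * |g x|) ∂μ := by
        refine (Real.norm_eq_abs _).symm.trans_le
          (norm_integral_le_of_norm_le (hfg.const_mul M) ?_)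
        filter_upwards [hu] with x hx
        rw [Real.norm_eq_abs, abs_mul, abs_mul, mul_assoc]
        gcongr
    _ = M * ∫ x, |f x| * |g x| ∂μ := integral_const_mul M _
    _ ≤ _ := by gcongr; exact integral_abs_mul_abs_le_sqrt_mul_sqrt hf hg

theorem intervalIntegral_abs_mul_abs_le {a b : ℝ} (hab : a ≤ b) {f g : ℝ → ℝ}
    (hf : Continuous f) (hg : Continuous g) :
    ∫ x in a..b, |f x| * |g x| ≤ √(∫ x in a..b, f x ^ 2) * √(∫ x in a..b, g x ^ 2) := by
  simp only [integral_of_le hab]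
  exact integral_abs_mul_abs_le_sqrt_mul_sqrt
    (hf.memLp_two_restrict isCompact_Icc Ioc_subset_Icc_self)
    (hg.memLp_two_restrict isCompact_Icc Ioc_subset_Icc_self)

theorem sq_le_of_hasDerivAt {a b : ℝ} (hab : a < b) {g g' : ℝ → ℝ}
    (hg : ∀ t, HasDerivAt g (g' t) t) (hg' : Continuous g') {x : ℝ} (hx : x ∈ Icc a b) :
    g x ^ 2 ≤ (b - a)⁻¹ * (∫ t in a..b, g t ^ 2) + 2 * ∫ t in a..b, |g t| * |g' t| := by
  have hgc : Continuous g := continuous_iff_continuousAt.2 fun t => (hg t).continuousAt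
  obtain ⟨y, hy, hmin⟩ := isCompact_Icc.exists_isMinOn (nonempty_Icc.2 hab.le)
    (hgc.pow 2).continuousOn
  have hy_le : g y ^ 2 ≤ (b - a)⁻¹ * ∫ t in a..b, g t ^ 2 := by
    rw [← div_eq_inv_mul, le_div_iff₀ (sub_pos.2 hab), mul_comm, ← smul_eq_mul,
      ← intervalIntegral.integral_const]
    exact integral_mono_on hab.le intervalIntegrable_const
      ((hgc.pow 2).intervalIntegrable _ _) fun t ht => hmin ht
  have hsq : ∀ t, HasDerivAt (fun s => g s ^ 2) (2 * g t * g' t) t := fun t => by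
    simpa using (hg t).fun_pow 2
  have hsub : uIoc y x ⊆ uIoc a b := by
    rw [uIoc_of_le hab.le]
    exact Ioc_subset_Ioc (le_inf hy.1 hx.1) (sup_le hy.2 hx.2)
  have hxy : g x ^ 2 - g y ^ 2 ≤ 2 * ∫ t in a..b, |g t| * |g' t| := by
    rw [← integral_eq_sub_of_hasDerivAt (fun t _ => hsq t)
      (((continuous_const.mul hgc).mul hg').intervalIntegrable _ _)]
    have hint : IntervalIntegrable (fun t => ‖2 * g t * g' t‖) volume a b :=
      ((continuous_const.mul hgc).mul hg').norm.intervalIntegrable _ _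
    calc ∫ t in y..x, 2 * g t * g' t ≤ |∫ t in y..x, ‖2 * g t * g' t‖| :=
          (le_abs_self _).trans
            (norm_integral_le_abs_integral_norm (f := fun t => 2 * g t * g' t))
      _ ≤ |∫ t in a..b, ‖2 * g t * g' t‖| :=
          abs_integral_mono_interval hsub (Filter.Eventually.of_forall fun t => norm_nonneg _) hint
      _ = 2 * ∫ t in a..b, |g t| * |g' t| := by
          rw [abs_of_nonneg (integral_nonneg hab.le fun t _ => norm_nonneg _),
            ← intervalIntegral.integral_const_mul]
          simp only [norm_mul, Real.norm_eq_abs, abs_two, mul_assoc]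
  exact (sub_le_iff_le_add'.1 hxy).trans (add_le_add_left hy_le _)

/-- The interpolation step: for `A = |u|`, `X = |∂u|`, `Z = |∂²u|` in one direction, `key` is what
integrating `(∂u)²` by parts gives once the boundary terms are bounded by the trace estimate. -/
theorem le_mul_sqrt_of_sq_le {k A X Z Q : ℝ} (hk : 0 ≤ k) (hA : 0 ≤ A) (hX : 0 ≤ X)
    (hZ : 0 ≤ Z) (hAQ : A ≤ Q) (hXQ : X ≤ Q) (hZQ : Z ≤ Q)
    (key : X ^ 2 ≤ A * Z + 2 * (√(k * A ^ 2 + 2 * (A * X)) * √(k * X ^ 2 + 2 * (X * Z)))) :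
    X ≤ (5 + 2 * k) * √(A * Q) := by
  have hQ : 0 ≤ Q := hA.trans hAQ
  set K := √(A * Q)
  have hK : 0 ≤ K := Real.sqrt_nonneg _
  have hK2 : K ^ 2 = A * Q := Real.sq_sqrt (mul_nonneg hA hQ)
  rcases le_total X A with hXA | hAX
  · have hAK : A ≤ K := Real.le_sqrt_of_sq_le (by nlinarith)
    nlinarith
  have hroot : √(k * A ^ 2 + 2 * (A * X)) * √(k * X ^ 2 + 2 * (X * Z)) ≤ (k + 2) * X * K := by
    rw [← Real.sqrt_mul (by positivity), ← Real.sqrt_sq (by positivity : 0 ≤ (k + 2) * X * K)]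
    apply Real.sqrt_le_sqrt
    calc (k * A ^ 2 + 2 * (A * X)) * (k * X ^ 2 + 2 * (X * Z))
        ≤ ((k + 2) * (A * X)) * ((k + 2) * (X * Q)) := by
          refine mul_le_mul ?_ ?_ (by positivity) (by positivity)
          · nlinarith [mul_le_mul_of_nonneg_left hAX (mul_nonneg hk hA)]
          · nlinarith [mul_le_mul_of_nonneg_left hXQ (mul_nonneg hk hX),
              mul_le_mul_of_nonneg_left hZQ hX]
      _ = ((k + 2) * X * K) ^ 2 := by rw [mul_pow, hK2]; ring
  have hXK : X ^ 2 ≤ K ^ 2 + 2 * (k + 2) * X * K := by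
    nlinarith [mul_le_mul_of_nonneg_left hZQ hA]
  by_contra! hlt
  have hKX : K ≤ X := by nlinarith
  nlinarith [mul_lt_mul_of_pos_left hlt ((by positivity : (0:ℝ) ≤ (5 + 2 * k) * K).trans_lt hlt),
    mul_le_mul_of_nonneg_left hKX hK]

/-- With `α`, `γ` the integrals of `u²` and `(∂_z u)²` over a vertical segment, `ax`, `az`, `m` the
norms of `∂ₓu`, `∂_z u`, `∂ₓ∂_z u`, and `v = u²` at a point of that segment: every term is of
order `K² = A Q`. -/
theorem le_mul_of_line_integral_bounds {k₁ k₂ A Q ax az m α γ v : ℝ} (hk₁ : 0 ≤ k₁) (hk₂ : 0 ≤ k₂)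
    (hA : 0 ≤ A) (haz0 : 0 ≤ az) (hAQ : A ≤ Q) (hmQ : m ≤ Q)
    (hax : ax ≤ (5 + 2 * k₁) * √(A * Q)) (haz : az ≤ (5 + 2 * k₂) * √(A * Q))
    (hα : α ≤ k₁ * A ^ 2 + 2 * (A * ax)) (hγ : γ ≤ k₁ * az ^ 2 + 2 * (az * m))
    (hv : v ≤ k₂ * α + 2 * (√α * √γ)) :
    v ≤ (3 * (5 + 2 * k₁ + 2 * k₂)) ^ 2 * (A * Q) := by
  set κ := 5 + 2 * k₁ + 2 * k₂
  set K := √(A * Q)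
  have hQ : 0 ≤ Q := hA.trans hAQ
  have hK : 0 ≤ K := Real.sqrt_nonneg _
  have hK2 : K ^ 2 = A * Q := Real.sq_sqrt (mul_nonneg hA hQ)
  have hAK : A ≤ K := Real.le_sqrt_of_sq_le (by nlinarith)
  have hKQ : K ≤ Q := (Real.sqrt_le_left hQ).2 (by nlinarith)
  have hκ : 1 ≤ κ := by linarith
  have hax' : ax ≤ κ * K := hax.trans (mul_le_mul_of_nonneg_right (by linarith) hK)
  have haz' : az ≤ κ * K := haz.trans (mul_le_mul_of_nonneg_right (by linarith) hK)
  have hα' : α ≤ 3 * κ * (A * K) := by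
    nlinarith [mul_le_mul_of_nonneg_left hAK (mul_nonneg hk₁ hA),
      mul_le_mul_of_nonneg_right (by linarith : k₁ ≤ κ) (mul_nonneg hA hK),
      mul_le_mul_of_nonneg_left hax' hA]
  have hγ' : γ ≤ 3 * κ ^ 3 * (K * Q) := by
    have haz2 : az ^ 2 ≤ κ ^ 2 * (K * Q) :=
      calc az ^ 2 ≤ (κ * K) ^ 2 := pow_le_pow_left₀ haz0 haz' 2
        _ ≤ κ ^ 2 * (K * Q) := by rw [mul_pow, sq K]; gcongr
    have h₁ : k₁ * az ^ 2 ≤ κ ^ 3 * (K * Q) :=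
      calc k₁ * az ^ 2 ≤ κ * (κ ^ 2 * (K * Q)) := by gcongr; linarith
        _ = κ ^ 3 * (K * Q) := by ring
    have h₂ : az * m ≤ κ ^ 3 * (K * Q) :=
      calc az * m ≤ az * Q := mul_le_mul_of_nonneg_left hmQ haz0
        _ ≤ κ * K * Q := mul_le_mul_of_nonneg_right haz' hQ
        _ ≤ κ ^ 3 * (K * Q) := by
          rw [mul_assoc]
          exact mul_le_mul_of_nonneg_right (le_self_pow₀ hκ (by norm_num)) (mul_nonneg hK hQ)
    linarith
  have hroot : √α * √γ ≤ 3 * κ ^ 2 * K ^ 2 :=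
    calc √α * √γ ≤ √(3 * κ * (A * K)) * √(3 * κ ^ 3 * (K * Q)) :=
          mul_le_mul (Real.sqrt_le_sqrt hα') (Real.sqrt_le_sqrt hγ') (Real.sqrt_nonneg _)
            (Real.sqrt_nonneg _)
      _ = √((3 * κ ^ 2 * K ^ 2) ^ 2) := by
          rw [← Real.sqrt_mul (by positivity)]
          congr 1
          linear_combination (9 * κ ^ 4 * K ^ 2) * hK2.symm
      _ = 3 * κ ^ 2 * K ^ 2 := Real.sqrt_sq (by positivity)
  have hk₂α : k₂ * α ≤ 3 * κ ^ 2 * K ^ 2 := by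
    nlinarith [mul_le_mul_of_nonneg_left hα' hk₂, mul_le_mul_of_nonneg_right hAK hK,
      mul_le_mul_of_nonneg_right (by linarith : k₂ ≤ κ) (by positivity : 0 ≤ 3 * κ * (A * K))]
  nlinarith

noncomputable def rectL2 (a b c d : ℝ) (F : ℝ × ℝ → ℝ) : ℝ :=
  √(∫ p in Ioo a b ×ˢ Ioo c d, F p ^ 2)

section Rectangle

variable {a b c d : ℝ} {F G H : ℝ × ℝ → ℝ}

theorem Continuous.memLp_two_rect (hF : Continuous F) :
    MemLp F 2 (volume.restrict (Ioo a b ×ˢ Ioo c d)) :=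
  hF.memLp_two_restrict (isCompact_Icc.prod isCompact_Icc)
    (prod_mono Ioo_subset_Icc_self Ioo_subset_Icc_self)

theorem setIntegral_rect_eq_integral_integral (hab : a ≤ b) (hcd : c ≤ d) (hF : Continuous F) :
    ∫ p in Ioo a b ×ˢ Ioo c d, F p = ∫ s in a..b, ∫ t in c..d, F (s, t) := by
  have hint : IntegrableOn F (Ioo a b ×ˢ Ioo c d) :=
    (hF.continuousOn.integrableOn_compact (isCompact_Icc.prod isCompact_Icc)).mono_set
      (prod_mono Ioo_subset_Icc_self Ioo_subset_Icc_self)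
  rw [Measure.volume_eq_prod] at hint ⊢
  rw [setIntegral_prod F hint, integral_of_le hab, integral_Ioc_eq_integral_Ioo]
  simp only [integral_of_le hcd, integral_Ioc_eq_integral_Ioo]

theorem rectL2_sq (F : ℝ × ℝ → ℝ) :
    rectL2 a b c d F ^ 2 = ∫ p in Ioo a b ×ˢ Ioo c d, F p ^ 2 :=
  Real.sq_sqrt (integral_nonneg fun _ => sq_nonneg _)

theorem rectL2_comp_swap (F : ℝ × ℝ → ℝ) :
    rectL2 c d a b (F ∘ Prod.swap) = rectL2 a b c d F := by
  unfold rectL2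
  rw [Measure.volume_eq_prod]
  exact congrArg Real.sqrt (setIntegral_prod_swap (Ioo a b) (Ioo c d) fun p => F p ^ 2)

theorem setIntegral_abs_mul_abs_le_rectL2 (hF : Continuous F) (hG : Continuous G) :
    ∫ p in Ioo a b ×ˢ Ioo c d, |F p| * |G p| ≤ rectL2 a b c d F * rectL2 a b c d G :=
  integral_abs_mul_abs_le_sqrt_mul_sqrt hF.memLp_two_rect hG.memLp_two_rect

theorem Continuous.intervalIntegral_snd (hF : Continuous F) (c d : ℝ) :
    Continuous fun s => ∫ t in c..d, F (s, t) :=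
  continuous_parametric_intervalIntegral_of_continuous' (f := fun s t => F (s, t)) hF c d

theorem integral_sq_at_snd_le (hab : a ≤ b) (hcd : c < d) (hF : Continuous F) (hG : Continuous G)
    (hFG : ∀ s t, HasDerivAt (fun t => F (s, t)) (G (s, t)) t) {t₀ : ℝ} (ht₀ : t₀ ∈ Icc c d) :
    ∫ s in a..b, F (s, t₀) ^ 2 ≤
      (d - c)⁻¹ * rectL2 a b c d F ^ 2 + 2 * (rectL2 a b c d F * rectL2 a b c d G) := by
  have hFG₁ : Continuous fun p => |F p| * |G p| := hF.abs.mul hG.abs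
  calc ∫ s in a..b, F (s, t₀) ^ 2
      ≤ ∫ s in a..b, ((d - c)⁻¹ * (∫ t in c..d, F (s, t) ^ 2) +
          2 * ∫ t in c..d, |F (s, t)| * |G (s, t)|) :=
        integral_mono_on hab
          (((hF.comp (Continuous.prodMk_left t₀)).pow 2).intervalIntegrable _ _)
          ((((hF.fun_pow 2).intervalIntegral_snd c d).const_mul _).add
            ((hFG₁.intervalIntegral_snd c d).const_mul _) |>.intervalIntegrable _ _)
          fun s _ => sq_le_of_hasDerivAt hcd (hFG s) (hG.comp (Continuous.prodMk_right s)) ht₀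
    _ = (d - c)⁻¹ * (∫ p in Ioo a b ×ˢ Ioo c d, F p ^ 2) +
          2 * ∫ p in Ioo a b ×ˢ Ioo c d, |F p| * |G p| := by
        rw [integral_add
            ((((hF.fun_pow 2).intervalIntegral_snd c d).const_mul _).intervalIntegrable _ _)
            (((hFG₁.intervalIntegral_snd c d).const_mul _).intervalIntegrable _ _),
          intervalIntegral.integral_const_mul, intervalIntegral.integral_const_mul,
          setIntegral_rect_eq_integral_integral hab hcd.le (hF.fun_pow 2),
          setIntegral_rect_eq_integral_integral hab hcd.le hFG₁]
    _ ≤ _ := by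
        rw [rectL2_sq]
        gcongr
        exact setIntegral_abs_mul_abs_le_rectL2 hF hG

theorem rectL2_sq_deriv_snd_eq (hab : a ≤ b) (hcd : c ≤ d) (hF : Continuous F)
    (hG : Continuous G) (hH : Continuous H)
    (hFG : ∀ s t, HasDerivAt (fun t => F (s, t)) (G (s, t)) t)
    (hGH : ∀ s t, HasDerivAt (fun t => G (s, t)) (H (s, t)) t) :
    rectL2 a b c d G ^ 2 = (∫ s in a..b, F (s, d) * G (s, d)) -
      (∫ s in a..b, F (s, c) * G (s, c)) - ∫ p in Ioo a b ×ˢ Ioo c d, F p * H p := by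
  have hslice : ∀ t, Continuous fun s => F (s, t) * G (s, t) := fun t =>
    (hF.mul hG).comp (Continuous.prodMk_left t)
  rw [rectL2_sq, setIntegral_rect_eq_integral_integral hab hcd (hG.fun_pow 2),
    setIntegral_rect_eq_integral_integral hab hcd (hF.fun_mul hH),
    ← integral_sub ((hslice d).intervalIntegrable _ _) ((hslice c).intervalIntegrable _ _),
    ← integral_sub (((hslice d).fun_sub (hslice c)).intervalIntegrable _ _)
      (((hF.fun_mul hH).intervalIntegral_snd c d).intervalIntegrable _ _)]
  refine integral_congr fun s _ => ?_
  have := integral_mul_deriv_eq_deriv_mul (a := c) (b := d) (fun t _ => hFG s t)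
    (fun t _ => hGH s t) ((hG.comp (Continuous.prodMk_right s)).intervalIntegrable _ _)
    ((hH.comp (Continuous.prodMk_right s)).intervalIntegrable _ _)
  simp only [sq]
  linarith

theorem abs_integral_mul_at_snd_le (hab : a ≤ b) (hcd : c < d) (hF : Continuous F)
    (hG : Continuous G) (hH : Continuous H)
    (hFG : ∀ s t, HasDerivAt (fun t => F (s, t)) (G (s, t)) t)
    (hGH : ∀ s t, HasDerivAt (fun t => G (s, t)) (H (s, t)) t) {t₀ : ℝ} (ht₀ : t₀ ∈ Icc c d) :
    |∫ s in a..b, F (s, t₀) * G (s, t₀)| ≤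
      √((d - c)⁻¹ * rectL2 a b c d F ^ 2 + 2 * (rectL2 a b c d F * rectL2 a b c d G)) *
        √((d - c)⁻¹ * rectL2 a b c d G ^ 2 + 2 * (rectL2 a b c d G * rectL2 a b c d H)) :=
  calc |∫ s in a..b, F (s, t₀) * G (s, t₀)|
      ≤ ∫ s in a..b, |F (s, t₀)| * |G (s, t₀)| :=
        (abs_integral_le_integral_abs hab).trans_eq (integral_congr fun s _ => abs_mul _ _)
    _ ≤ √(∫ s in a..b, F (s, t₀) ^ 2) * √(∫ s in a..b, G (s, t₀) ^ 2) :=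
        intervalIntegral_abs_mul_abs_le hab (hF.comp (Continuous.prodMk_left t₀))
          (hG.comp (Continuous.prodMk_left t₀))
    _ ≤ _ := by
        gcongr
        · exact integral_sq_at_snd_le hab hcd hF hG hFG ht₀
        · exact integral_sq_at_snd_le hab hcd hG hH hGH ht₀

theorem rectL2_deriv_snd_le (hab : a ≤ b) (hcd : c < d) (hF : Continuous F) (hG : Continuous G)
    (hH : Continuous H) (hFG : ∀ s t, HasDerivAt (fun t => F (s, t)) (G (s, t)) t)
    (hGH : ∀ s t, HasDerivAt (fun t => G (s, t)) (H (s, t)) t) {Q : ℝ}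
    (hFQ : rectL2 a b c d F ≤ Q) (hGQ : rectL2 a b c d G ≤ Q) (hHQ : rectL2 a b c d H ≤ Q) :
    rectL2 a b c d G ≤ (5 + 2 * (d - c)⁻¹) * √(rectL2 a b c d F * Q) := by
  refine le_mul_sqrt_of_sq_le (Z := rectL2 a b c d H) (inv_nonneg.2 (sub_pos.2 hcd).le)
    (Real.sqrt_nonneg _) (Real.sqrt_nonneg _) (Real.sqrt_nonneg _) hFQ hGQ hHQ ?_
  have hd := abs_integral_mul_at_snd_le hab hcd hF hG hH hFG hGH (right_mem_Icc.2 hcd.le)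
  have hc := abs_integral_mul_at_snd_le hab hcd hF hG hH hFG hGH (left_mem_Icc.2 hcd.le)
  have hFH : -∫ p in Ioo a b ×ˢ Ioo c d, F p * H p ≤ rectL2 a b c d F * rectL2 a b c d H :=
    calc -∫ p in Ioo a b ×ˢ Ioo c d, F p * H p
        ≤ ∫ p in Ioo a b ×ˢ Ioo c d, |F p| * |H p| := by
          simpa only [← abs_mul] using (neg_le_abs _).trans abs_integral_le_integral_abs
      _ ≤ _ := setIntegral_abs_mul_abs_le_rectL2 hF hH
  linarith [rectL2_sq_deriv_snd_eq hab hcd.le hF hG hH hFG hGH,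
    le_abs_self (∫ s in a..b, F (s, d) * G (s, d)), neg_abs_le (∫ s in a..b, F (s, c) * G (s, c))]

theorem integral_sq_at_fst_le (hab : a < b) (hcd : c ≤ d) (hF : Continuous F) (hG : Continuous G)
    (hFG : ∀ s t, HasDerivAt (fun s => F (s, t)) (G (s, t)) s) {s₀ : ℝ} (hs₀ : s₀ ∈ Icc a b) :
    ∫ t in c..d, F (s₀, t) ^ 2 ≤
      (b - a)⁻¹ * rectL2 a b c d F ^ 2 + 2 * (rectL2 a b c d F * rectL2 a b c d G) := by
  have := integral_sq_at_snd_le hcd hab (hF.comp continuous_swap) (hG.comp continuous_swap)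
    (fun t s => hFG s t) hs₀
  rwa [rectL2_comp_swap, rectL2_comp_swap] at this

theorem rectL2_deriv_fst_le (hab : a < b) (hcd : c ≤ d) (hF : Continuous F) (hG : Continuous G)
    (hH : Continuous H) (hFG : ∀ s t, HasDerivAt (fun s => F (s, t)) (G (s, t)) s)
    (hGH : ∀ s t, HasDerivAt (fun s => G (s, t)) (H (s, t)) s) {Q : ℝ}
    (hFQ : rectL2 a b c d F ≤ Q) (hGQ : rectL2 a b c d G ≤ Q) (hHQ : rectL2 a b c d H ≤ Q) :
    rectL2 a b c d G ≤ (5 + 2 * (b - a)⁻¹) * √(rectL2 a b c d F * Q) := by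
  simp only [← rectL2_comp_swap (a := a) (b := b) (c := c) (d := d)] at hFQ hGQ hHQ ⊢
  exact rectL2_deriv_snd_le hcd hab (hF.comp continuous_swap) (hG.comp continuous_swap)
    (hH.comp continuous_swap) (fun t s => hFG s t) (fun t s => hGH s t) hFQ hGQ hHQ

end Rectangle

theorem ContDiff.pdx {f : ℝ × ℝ → ℝ} {m n : WithTop ℕ∞} (hf : ContDiff ℝ n f) (hmn : m + 1 ≤ n) :
    ContDiff ℝ m (pdx f) :=
  (hf.fderiv_right hmn).clm_apply contDiff_const

theorem ContDiff.pdz {f : ℝ × ℝ → ℝ} {m n : WithTop ℕ∞} (hf : ContDiff ℝ n f) (hmn : m + 1 ≤ n) :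
    ContDiff ℝ m (pdz f) :=
  (hf.fderiv_right hmn).clm_apply contDiff_const

theorem Differentiable.hasDerivAt_pdx {f : ℝ × ℝ → ℝ} (hf : Differentiable ℝ f) (x z : ℝ) :
    HasDerivAt (fun s => f (s, z)) (pdx f (x, z)) x :=
  (hf (x, z)).hasFDerivAt.comp_hasDerivAt x ((hasDerivAt_id x).prodMk (hasDerivAt_const x z))

theorem Differentiable.hasDerivAt_pdz {f : ℝ × ℝ → ℝ} (hf : Differentiable ℝ f) (x z : ℝ) :
    HasDerivAt (fun t => f (x, t)) (pdz f (x, z)) z :=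
  (hf (x, z)).hasFDerivAt.comp_hasDerivAt z ((hasDerivAt_const z x).prodMk (hasDerivAt_id z))

theorem abs_le_mul_sqrt_rectL2_mul {a b c d : ℝ} (hab : a < b) (hcd : c < d) {u : ℝ × ℝ → ℝ}
    (hu : ContDiff ℝ 2 u) {Q : ℝ} (h₀ : rectL2 a b c d u ≤ Q)
    (hx : rectL2 a b c d (pdx u) ≤ Q) (hz : rectL2 a b c d (pdz u) ≤ Q)
    (hxx : rectL2 a b c d (pdx (pdx u)) ≤ Q) (hxz : rectL2 a b c d (pdx (pdz u)) ≤ Q)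
    (hzz : rectL2 a b c d (pdz (pdz u)) ≤ Q) {p : ℝ × ℝ} (hp : p ∈ Icc a b ×ˢ Icc c d) :
    |u p| ≤ 3 * (5 + 2 * (b - a)⁻¹ + 2 * (d - c)⁻¹) * √(rectL2 a b c d u * Q) := by
  obtain ⟨x, z⟩ := p
  obtain ⟨hx₀, hz₀⟩ := hp
  have hux : ContDiff ℝ 1 (pdx u) := hu.pdx (by norm_num)
  have huz : ContDiff ℝ 1 (pdz u) := hu.pdz (by norm_num)
  have hud : Differentiable ℝ u := hu.differentiable (by norm_num)
  have huxd : Differentiable ℝ (pdx u) := hux.differentiable one_ne_zero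
  have huzd : Differentiable ℝ (pdz u) := huz.differentiable one_ne_zero
  have huxx : Continuous (pdx (pdx u)) := (hux.pdx (m := 0) (by norm_num)).continuous
  have huxz : Continuous (pdx (pdz u)) := (huz.pdx (m := 0) (by norm_num)).continuous
  have huzz : Continuous (pdz (pdz u)) := (huz.pdz (m := 0) (by norm_num)).continuous
  have hint_x := rectL2_deriv_fst_le hab hcd.le hud.continuous huxd.continuous huxx
    hud.hasDerivAt_pdx huxd.hasDerivAt_pdx h₀ hx hxx
  have hint_z := rectL2_deriv_snd_le hab.le hcd hud.continuous huzd.continuous huzz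
    hud.hasDerivAt_pdz huzd.hasDerivAt_pdz h₀ hz hzz
  have htr_u := integral_sq_at_fst_le hab hcd.le hud.continuous huxd.continuous
    hud.hasDerivAt_pdx hx₀
  have htr_uz := integral_sq_at_fst_le hab hcd.le huzd.continuous huxz
    huzd.hasDerivAt_pdx hx₀
  have hpt : u (x, z) ^ 2 ≤ (d - c)⁻¹ * (∫ t in c..d, u (x, t) ^ 2) +
      2 * (√(∫ t in c..d, u (x, t) ^ 2) * √(∫ t in c..d, pdz u (x, t) ^ 2)) := by
    refine (sq_le_of_hasDerivAt hcd (hud.hasDerivAt_pdz x)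
      (huzd.continuous.comp (Continuous.prodMk_right x)) hz₀).trans ?_
    gcongr
    exact intervalIntegral_abs_mul_abs_le hcd.le
      (hud.continuous.comp (Continuous.prodMk_right x))
      (huzd.continuous.comp (Continuous.prodMk_right x))
  have hk₁ : 0 ≤ (b - a)⁻¹ := inv_nonneg.2 (sub_pos.2 hab).le
  have hk₂ : 0 ≤ (d - c)⁻¹ := inv_nonneg.2 (sub_pos.2 hcd).le
  have := le_mul_of_line_integral_bounds (A := rectL2 a b c d u) (az := rectL2 a b c d (pdz u))
    hk₁ hk₂ (Real.sqrt_nonneg _) (Real.sqrt_nonneg _) h₀ hxz hint_x hint_z htr_u htr_uz hpt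
  refine Real.abs_le_sqrt this |>.trans_eq ?_
  rw [Real.sqrt_mul (sq_nonneg _), Real.sqrt_sq (by positivity)]

theorem l2_le_h2n (L h : ℝ) (f : ℝ × ℝ → ℝ) :
    l2 L h f ≤ h2n L h f ∧ l2 L h (pdx f) ≤ h2n L h f ∧ l2 L h (pdz f) ≤ h2n L h f ∧
      l2 L h (pdx (pdx f)) ≤ h2n L h f ∧ l2 L h (pdx (pdz f)) ≤ h2n L h f ∧
      l2 L h (pdz (pdz f)) ≤ h2n L h f := by
  have h1n_sq : h1n L h f ^ 2 = l2 L h f ^ 2 + l2 L h (pdx f) ^ 2 + l2 L h (pdz f) ^ 2 :=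
    Real.sq_sqrt (by positivity)
  have h2n_sq : h2n L h f ^ 2 = h1n L h f ^ 2 + l2 L h (pdx (pdx f)) ^ 2 +
      l2 L h (pdx (pdz f)) ^ 2 + l2 L h (pdz (pdz f)) ^ 2 :=
    Real.sq_sqrt (by positivity)
  refine ⟨?_, ?_, ?_, ?_, ?_, ?_⟩ <;>
    refine (le_abs_self _).trans (abs_le_of_sq_le_sq (b := h2n L h f) ?_ (Real.sqrt_nonneg _)) <;>
    nlinarith [sq_nonneg (l2 L h f), sq_nonneg (l2 L h (pdx f)), sq_nonneg (l2 L h (pdz f)),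
      sq_nonneg (l2 L h (pdx (pdx f))), sq_nonneg (l2 L h (pdx (pdz f))),
      sq_nonneg (l2 L h (pdz (pdz f)))]

theorem stmt13 (L h : ℝ) (hL : 0 < L) (hh : 0 < h) :
    ∃ c > 0, ∀ u φ ψ : ℝ × ℝ → ℝ,
      ContDiff ℝ 2 u → ContDiff ℝ 1 φ → Continuous ψ →
      |∫ p in dom L h, u p * pdx φ p * ψ p| ≤
        c * l2 L h u ^ ((1:ℝ)/2) * h2n L h u ^ ((1:ℝ)/2) * l2 L h (pdx φ) * l2 L h ψ := by
  set c := 3 * (5 + 2 * L⁻¹ + 2 * h⁻¹)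
  have hc : 0 < c := by positivity
  refine ⟨c, hc, fun u φ ψ hu hφ hψ => ?_⟩
  obtain ⟨h₀, hx, hz, hxx, hxz, hzz⟩ := l2_le_h2n L h u
  -- `l2 L h` is `rectL2 0 L (-h) 0` by definition.
  have hsup : ∀ p ∈ dom L h, |u p| ≤ c * √(l2 L h u * h2n L h u) := fun p hp => by
    have := abs_le_mul_sqrt_rectL2_mul hL (neg_lt_zero.2 hh) hu h₀ hx hz hxx hxz hzz
      (prod_mono Ioo_subset_Icc_self Ioo_subset_Icc_self hp)
    rwa [sub_zero, zero_sub, neg_neg] at this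
  have hφx : Continuous (pdx φ) := (hφ.pdx (m := 0) (by norm_num)).continuous
  calc |∫ p in dom L h, u p * pdx φ p * ψ p|
      ≤ c * √(l2 L h u * h2n L h u) * (l2 L h (pdx φ) * l2 L h ψ) :=
        abs_integral_mul_mul_le (by positivity)
          (ae_restrict_of_forall_mem (measurableSet_Ioo.prod measurableSet_Ioo) hsup)
          hφx.memLp_two_rect hψ.memLp_two_rect
    _ = _ := by
        have hl2 : 0 ≤ l2 L h u := Real.sqrt_nonneg _
        rw [Real.sqrt_mul hl2, Real.sqrt_eq_rpow, Real.sqrt_eq_rpow]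
        ring
end
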